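/- arXiv:2210.13020 — 6 statements merged into one kernel-verified Lean document; each statement's English description precedes it below -/
import Mathlib

section
/- Let X be a complete lattice and s a monotone function on X. For each x, define s^*(x) as the least fixpoint of y ↦ x ⊔ s(y). Then s^* is the least closure operator above s, i.e., s^* is monotone, id ≤ s^*, s^* ∘ s^* ≤ s^*, s ≤ s^*, and for any closure c with s ≤ c we have s^* ≤ c. -/
/-- The least (pre)fixpoint of `y ↦ x ⊔ s y` (Knaster–Tarski). -/
def lstar {X : Type*} [CompleteLattice X] (s : X → X) (x : X) : X :=
  sInf {y | x ⊔ s y ≤ y}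

section Lstar

variable {X : Type*} [CompleteLattice X] {s : X → X}

theorem lstar_le_of_sup_le {x y : X} (h : x ⊔ s y ≤ y) : lstar s x ≤ y :=
  sInf_le h

theorem sup_apply_lstar_le (hs : Monotone s) (x : X) : x ⊔ s (lstar s x) ≤ lstar s x :=
  le_sInf fun _ hy => sup_le (le_sup_left.trans hy)
    ((hs (lstar_le_of_sup_le hy)).trans (le_sup_right.trans hy))

theorem le_lstar (hs : Monotone s) (x : X) : x ≤ lstar s x :=
  le_sup_left.trans (sup_apply_lstar_le hs x)

theorem apply_lstar_le (hs : Monotone s) (x : X) : s (lstar s x) ≤ lstar s x :=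
  le_sup_right.trans (sup_apply_lstar_le hs x)

theorem monotone_lstar (hs : Monotone s) : Monotone (lstar s) := fun _ b hab =>
  lstar_le_of_sup_le (sup_le (hab.trans (le_lstar hs b)) (apply_lstar_le hs b))

theorem lstar_lstar_le (hs : Monotone s) (x : X) : lstar s (lstar s x) ≤ lstar s x :=
  lstar_le_of_sup_le (sup_le le_rfl (apply_lstar_le hs x))

theorem apply_le_lstar (hs : Monotone s) (x : X) : s x ≤ lstar s x :=
  (hs (le_lstar hs x)).trans (apply_lstar_le hs x)

theorem lstar_le_of_le_closure {c : X → X} (hce : ∀ x, x ≤ c x) (hci : ∀ x, c (c x) ≤ c x)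
    (hsc : ∀ x, s x ≤ c x) (x : X) : lstar s x ≤ c x :=
  lstar_le_of_sup_le (sup_le (hce x) ((hsc (c x)).trans (hci x)))

end Lstar

/-- For monotone `s` on a complete lattice, `s^*` is the least closure above `s`:
it is monotone, extensive, idempotent, above `s`, and below every closure above `s`. -/
theorem lstar_least_closure {X : Type*} [CompleteLattice X] (s : X → X) (hs : Monotone s) :
    Monotone (lstar s) ∧
    (∀ x, x ≤ lstar s x) ∧
    (∀ x, lstar s (lstar s x) ≤ lstar s x) ∧
    (∀ x, s x ≤ lstar s x) ∧
    (∀ c : X → X, Monotone c → (∀ x, x ≤ c x) → (∀ x, c (c x) ≤ c x) →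
      (∀ x, s x ≤ c x) → ∀ x, lstar s x ≤ c x) :=
  ⟨monotone_lstar hs, le_lstar hs, lstar_lstar_le hs, apply_le_lstar hs,
    fun _ _ hce hci hsc => lstar_le_of_le_closure hce hci hsc⟩
end

section
/- Let s be a monotone function on a complete lattice, f a linear function (one preserving all joins), and c a closure. If f ∘ s ≤ c ∘ f, then f ∘ s^* ≤ c ∘ f. -/
section SSupPreserving

variable {α β : Type*} [CompleteLattice α] [CompleteLattice β] {f : α → β}

theorem monotone_of_map_sSup (hf : ∀ S : Set α, f (sSup S) = ⨆ x ∈ S, f x) : Monotone f := by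
  intro a b hab
  have hb : f b = ⨆ x ∈ ({a, b} : Set α), f x := by rw [← hf, sSup_pair, sup_eq_right.mpr hab]
  exact hb ▸ le_iSup₂_of_le a (Set.mem_insert a {b}) le_rfl

theorem gc_of_map_sSup (hf : ∀ S : Set α, f (sSup S) = ⨆ x ∈ S, f x) :
    GaloisConnection f (fun b => sSup {a | f a ≤ b}) := by
  intro a b
  refine ⟨fun h => le_sSup h, fun h => ?_⟩
  calc f a ≤ f (sSup {a | f a ≤ b}) := monotone_of_map_sSup hf h
    _ = ⨆ x ∈ {a | f a ≤ b}, f x := hf _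
    _ ≤ b := iSup₂_le fun _ hx => hx

end SSupPreserving

theorem lstar_le {X : Type*} [CompleteLattice X] {s : X → X} {x y : X} (h : x ⊔ s y ≤ y) :
    lstar s x ≤ y :=
  sInf_le h

theorem comp_lstar_le_general {X : Type*} [CompleteLattice X] (s f c : X → X)
    (hf_lin : ∀ S : Set X, f (sSup S) = ⨆ x ∈ S, f x)
    (hc_mono : Monotone c) (hc_ext : ∀ x, x ≤ c x) (hc_idem : ∀ x, c (c x) ≤ c x)
    (h : ∀ x, f (s x) ≤ c (f x)) :
    ∀ x, f (lstar s x) ≤ c (f x) := by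
  intro x
  have gc := gc_of_map_sSup hf_lin
  set g := sSup {a | f a ≤ c (f x)}
  have hs_g : f (s g) ≤ c (f x) :=
    calc f (s g) ≤ c (f g) := h g
      _ ≤ c (c (f x)) := hc_mono (gc.l_u_le _)
      _ ≤ c (f x) := hc_idem _
  exact (gc _ _).2 (lstar_le (sup_le ((gc _ _).1 (hc_ext _)) ((gc _ _).1 hs_g)))

/-- If `f` is linear (preserves all joins), `c` is a closure and `f ∘ s ≤ c ∘ f`,
then `f ∘ s^* ≤ c ∘ f`. -/
theorem comp_lstar_le {X : Type*} [CompleteLattice X] (s f c : X → X)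
    (hs : Monotone s)
    (hf_lin : ∀ S : Set X, f (sSup S) = ⨆ x ∈ S, f x)
    (hc_mono : Monotone c) (hc_ext : ∀ x, x ≤ c x) (hc_idem : ∀ x, c (c x) ≤ c x)
    (h : ∀ x, f (s x) ≤ c (f x)) :
    ∀ x, f (lstar s x) ≤ c (f x) :=
  comp_lstar_le_general s f c hf_lin hc_mono hc_ext hc_idem h
end

section
/- Let l, r be functions on regular expressions over Σ with l linear (⟦l(e)⟧ = ⋃_{w ∈ ⟦e⟧} ⟦l(w)⟧) and r monotone (⟦e⟧ ⊆ ⟦f⟧ implies ⟦r(e)⟧ ⊆ ⟦r(f)⟧). Then the one-step functions on languages associated to H = {l(e) ≤ r(e) | e a regular expression} and H' = {l(w) ≤ r(w) | w ∈ Σ^*} are equal. -/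
/-- The one-step function associated with a set `H` of hypotheses `e ≤ f`
(pairs of regular expressions): it adds `u·⟦e⟧·v` whenever `u·⟦f⟧·v ⊆ L`. -/
def onestep {α : Type*} (H : Set (RegularExpression α × RegularExpression α))
    (L : Language α) : Language α :=
  {w | ∃ p ∈ H, ∃ u v : List α,
    (∀ x ∈ p.2.matches', u ++ x ++ v ∈ L) ∧ ∃ x ∈ p.1.matches', w = u ++ x ++ v}

/-- A word regarded as a regular expression (the product of its letters). -/
def ofWord {α : Type*} (w : List α) : RegularExpression α :=
  w.foldr (fun a e => RegularExpression.char a * e) 1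

/-! Linearity of `l` splits each instance `u·x·v` of `l(e) ≤ r(e)`, `x ∈ ⟦l(e)⟧`, into an instance
of `l(w) ≤ r(w)` for some word `w ∈ ⟦e⟧`, whose premise `u·⟦r(w)⟧·v ⊆ L` is weaker by monotonicity
of `r`. -/

section

variable {α : Type*}

theorem matches'_ofWord (w : List α) : (ofWord w).matches' = {w} := by
  induction w with
  | nil => exact RegularExpression.matches'_epsilon
  | cons a t ih =>
    change (RegularExpression.char a * ofWord t).matches' = _
    rw [RegularExpression.matches'_mul, RegularExpression.matches'_char, ih]
    exact Set.image2_singleton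

theorem onestep_le_onestep {H H' : Set (RegularExpression α × RegularExpression α)}
    (h : ∀ p ∈ H, ∀ x ∈ p.1.matches',
      ∃ q ∈ H', x ∈ q.1.matches' ∧ q.2.matches' ≤ p.2.matches')
    (L : Language α) : onestep H L ≤ onestep H' L := by
  rintro _ ⟨p, hp, u, v, hsub, x, hx, rfl⟩
  obtain ⟨q, hq, hxq, hqp⟩ := h p hp x hx
  exact ⟨q, hq, u, v, fun y hy => hsub y (hqp hy), x, hxq, rfl⟩

end

/-- If `l` is linear and `r` is monotone (on languages of regular expressions), then the
one-step functions associated with `H = {l(e) ≤ r(e) | e}` and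
`H' = {l(w) ≤ r(w) | w a word}` coincide. -/
theorem onestep_univ_eq_onestep_words {α : Type*}
    (l r : RegularExpression α → RegularExpression α)
    (hl : ∀ e : RegularExpression α,
      (l e).matches' = ⋃ w ∈ e.matches', (l (ofWord w)).matches')
    (hr : ∀ e f : RegularExpression α,
      e.matches' ≤ f.matches' → (r e).matches' ≤ (r f).matches') :
    onestep (Set.range fun e => (l e, r e)) =
      onestep (Set.range fun w : List α => (l (ofWord w), r (ofWord w))) := by
  funext L
  apply le_antisymm
  · refine onestep_le_onestep ?_ L
    rintro _ ⟨e, rfl⟩ x hx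
    obtain ⟨w, hw, hxw⟩ := Set.mem_iUnion₂.mp (hl e ▸ hx)
    refine ⟨_, ⟨w, rfl⟩, hxw, hr _ _ ?_⟩
    rw [matches'_ofWord]
    exact Set.singleton_subset_iff.mpr hw
  · refine onestep_le_onestep ?_ L
    rintro _ ⟨w, rfl⟩ x hx
    exact ⟨_, ⟨ofWord w, rfl⟩, hx, le_rfl⟩
end

section
/- Let H_i be a set of hypotheses whose right-hand sides are words and H_j a set whose left-hand sides are words, over a common alphabet. If no right-hand side of H_i has an overlap with any left-hand side of H_j, then H_i ∘ H_j ⊆ H_j ∘ H_i as one-step functions on languages. -/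
/-- `(x, y, s, t)` is an overlap of the words `u` and `v`. -/
def IsOverlap {α : Type*} (u v x y s t : List α) : Prop :=
  x ++ u ++ y = s ++ v ++ t ∧
    ((x = [] ∧ t = [] ∧ y.length < v.length) ∨
     (y = [] ∧ s = [] ∧ x.length < v.length) ∨
     (x = [] ∧ y = [] ∧ s ≠ [] ∧ t ≠ []) ∨
     (s = [] ∧ t = [] ∧ x ≠ [] ∧ y ≠ []))

/-
Two occurrences of words `a` and `b` inside one word are either disjoint or form an overlap of
`a` and `b`. So if an `Hi`-step rewrites the right-hand side `w` of `p ∈ Hi` in a word obtained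
by an `Hj`-step, the occurrence of `w` is disjoint from the rewritten left-hand side of `q ∈ Hj`
and `p` can be applied first. Since `p.2` denotes the single word `w`, one `Hj`-witness suffices
for the `Hi`-step.
-/

section NoOverlap

variable {α : Type*}

theorem IsOverlap.symm {a b x y s t : List α} (h : IsOverlap a b x y s t) :
    IsOverlap b a s t x y := by
  obtain ⟨heq, h⟩ := h
  have hlen := congrArg List.length heq
  simp only [List.length_append] at hlen
  refine ⟨heq.symm, ?_⟩
  rcases h with ⟨rfl, rfl, h⟩ | ⟨rfl, rfl, h⟩ | ⟨rfl, rfl, h⟩ | ⟨rfl, rfl, h⟩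
  · exact Or.inr (Or.inl ⟨rfl, rfl, by simp at hlen ⊢; omega⟩)
  · exact Or.inl ⟨rfl, rfl, by simp at hlen ⊢; omega⟩
  · exact Or.inr (Or.inr (Or.inr ⟨rfl, rfl, h⟩))
  · exact Or.inr (Or.inr (Or.inl ⟨rfl, rfl, h⟩))

def NoOverlap (a b : List α) : Prop :=
  ∀ x y s t : List α, ¬ IsOverlap a b x y s t

theorem NoOverlap.symm {a b : List α} (h : NoOverlap a b) : NoOverlap b a :=
  fun x y s t hov => h s t x y hov.symm

theorem isOverlap_of_eq_append {a b s t : List α} (h : a = s ++ b ++ t)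
    (hb : b ≠ [] ∨ s ≠ [] ∧ t ≠ []) : IsOverlap a b [] [] s t := by
  refine ⟨by simpa using h, ?_⟩
  rcases hb with hb | hst
  · rcases eq_or_ne s [] with rfl | hs
    · exact Or.inr (Or.inl ⟨rfl, rfl, by simpa using List.length_pos_iff.mpr hb⟩)
    rcases eq_or_ne t [] with rfl | ht
    · exact Or.inl ⟨rfl, rfl, by simpa using List.length_pos_iff.mpr hb⟩
    · exact Or.inr (Or.inr (Or.inl ⟨rfl, rfl, hs, ht⟩))
  · exact Or.inr (Or.inr (Or.inl ⟨rfl, rfl, hst⟩))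

theorem NoOverlap.eq_append_of_append_eq {a b c v v' : List α} (hno : NoOverlap a b)
    (h : a ++ v = c ++ b ++ v') :
    (∃ m, c = a ++ m ∧ v = m ++ b ++ v') ∨ (c = [] ∧ b = []) := by
  rw [List.append_assoc, List.append_eq_append_iff] at h
  rcases h with ⟨m, hc, hv⟩ | ⟨d, ha, hd⟩
  · exact Or.inl ⟨m, hc, by simpa using hv⟩
  rcases eq_or_ne d [] with rfl | hd0
  · exact Or.inl ⟨[], by simpa using ha.symm, by simpa using hd.symm⟩
  rcases List.append_eq_append_iff.mp hd with ⟨e, hde, -⟩ | ⟨e, hb, -⟩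
  · -- `b` lies inside `a = c ++ b ++ e`, which is an overlap unless `b = []` sits at the start
    subst hde
    by_cases hdeg : c = [] ∧ b = []
    · exact Or.inr hdeg
    refine absurd (isOverlap_of_eq_append (by simpa using ha) ?_) (hno [] [] c e)
    rcases eq_or_ne b [] with rfl | hb
    · exact Or.inr ⟨fun hc => hdeg ⟨hc, rfl⟩, by simpa using hd0⟩
    · exact Or.inl hb
  · refine absurd ⟨?_, Or.inl ⟨rfl, rfl, ?_⟩⟩ (hno [] e c [])
    · simp [ha, hb]
    · simpa [hb] using List.length_pos_iff.mpr hd0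

theorem NoOverlap.append_eq_append_cases {a b u v u' v' : List α} (hno : NoOverlap a b)
    (h : u ++ a ++ v = u' ++ b ++ v') :
    (∃ m, u = u' ++ b ++ m ∧ v' = m ++ a ++ v) ∨
      (∃ m, u' = u ++ a ++ m ∧ v = m ++ b ++ v') := by
  rw [List.append_assoc, List.append_assoc, List.append_eq_append_iff] at h
  rcases h with ⟨c, rfl, h⟩ | ⟨c, rfl, h⟩
  · rcases hno.eq_append_of_append_eq (by simpa using h) with ⟨m, rfl, hv⟩ | ⟨rfl, rfl⟩
    · exact Or.inr ⟨m, by simp, hv⟩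
    · exact Or.inl ⟨[], by simp, by simpa using h.symm⟩
  · rcases hno.symm.eq_append_of_append_eq (by simpa using h) with ⟨m, rfl, hv⟩ | ⟨rfl, rfl⟩
    · exact Or.inl ⟨m, by simp, hv⟩
    · exact Or.inr ⟨[], by simp, by simpa using h.symm⟩

end NoOverlap

theorem mem_onestep_of_matches'_eq_singleton {α : Type*}
    {H : Set (RegularExpression α × RegularExpression α)} {L : Language α}
    {p : RegularExpression α × RegularExpression α} {u v w x : List α} (hp : p ∈ H)
    (hw : p.2.matches' = {w}) (hL : u ++ w ++ v ∈ L) (hx : x ∈ p.1.matches') :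
    u ++ x ++ v ∈ onestep H L :=
  ⟨p, hp, u, v, by rw [hw]; rintro _ rfl; exact hL, x, hx, rfl⟩

theorem onestep_comm_of_no_overlap_general {α : Type*}
    (Hi Hj : Set (RegularExpression α × RegularExpression α))
    (hi : ∀ p ∈ Hi, ∃ w : List α, p.2.matches' = {w})
    (hno : ∀ p ∈ Hi, ∀ q ∈ Hj, ∀ u ∈ p.2.matches', ∀ v ∈ q.1.matches',
      ∀ x y s t : List α, ¬ IsOverlap u v x y s t) :
    ∀ L : Language α, onestep Hi (onestep Hj L) ≤ onestep Hj (onestep Hi L) := by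
  rintro L _ ⟨p, hp, u, v, hsub, x, hx, rfl⟩
  obtain ⟨wi, hwi⟩ := hi p hp
  have hwi_mem : wi ∈ p.2.matches' := by rw [hwi]; rfl
  obtain ⟨q, hq, u', v', hL, wj, hwj, heq⟩ := hsub wi hwi_mem
  rcases NoOverlap.append_eq_append_cases (hno p hp q hq wi hwi_mem wj hwj) heq with
    ⟨m, rfl, rfl⟩ | ⟨m, rfl, rfl⟩
  · refine ⟨q, hq, u', m ++ x ++ v, fun z hz => ?_, wj, hwj, by simp⟩
    simpa using mem_onestep_of_matches'_eq_singleton (u := u' ++ z ++ m) hp hwi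
      (by simpa using hL z hz) hx
  · refine ⟨q, hq, u ++ x ++ m, v', fun z hz => ?_, wj, hwj, by simp⟩
    simpa using mem_onestep_of_matches'_eq_singleton (v := m ++ z ++ v') hp hwi
      (by simpa using hL z hz) hx

/-- If the right-hand sides of `Hi` and the left-hand sides of `Hj` are words, and there are no
overlaps between them, then `Hi ∘ Hj ⊆ Hj ∘ Hi` as one-step functions on languages. -/
theorem onestep_comm_of_no_overlap {α : Type*}
    (Hi Hj : Set (RegularExpression α × RegularExpression α))
    (hi : ∀ p ∈ Hi, ∃ w : List α, p.2.matches' = {w})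
    (hj : ∀ q ∈ Hj, ∃ w : List α, q.1.matches' = {w})
    (hno : ∀ p ∈ Hi, ∀ q ∈ Hj, ∀ u ∈ p.2.matches', ∀ v ∈ q.1.matches',
      ∀ x y s t : List α, ¬ IsOverlap u v x y s t) :
    ∀ L : Language α, onestep Hi (onestep Hj L) ≤ onestep Hj (onestep Hi L) :=
  onestep_comm_of_no_overlap_general Hi Hj hi hno
end

section
/- For all words x, u, y, s, v, t with x u y = s v t, either |x u| ≤ |s|, or |s v| ≤ |x|, or there exist words l, r and an overlap (x', y', s', t') of u and v such that x = l x', s = l s', y = y' r, and t = t' r. -/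
namespace List

variable {α : Type*}

theorem exists_common_prefix_of_append_eq_append {x s a b : List α} (h : x ++ a = s ++ b) :
    ∃ l x' s', x = l ++ x' ∧ s = l ++ s' ∧ (x' = [] ∨ s' = []) ∧ x' ++ a = s' ++ b := by
  rcases append_eq_append_iff.1 h with ⟨s', rfl, rfl⟩ | ⟨x', rfl, rfl⟩
  · exact ⟨x, [], s', by simp, rfl, .inl rfl, rfl⟩
  · exact ⟨s, x', [], rfl, by simp, .inr rfl, rfl⟩

theorem exists_common_suffix_of_append_eq_append {a b y t : List α} (h : a ++ y = b ++ t) :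
    ∃ r y' t', y = y' ++ r ∧ t = t' ++ r ∧ (y' = [] ∨ t' = []) ∧ a ++ y' = b ++ t' := by
  rcases append_eq_append_iff.1 h with ⟨y', rfl, rfl⟩ | ⟨t', rfl, rfl⟩
  · exact ⟨_, _, [], rfl, rfl, .inr rfl, by simp⟩
  · exact ⟨_, [], _, rfl, rfl, .inl rfl, by simp⟩

end List

theorem isOverlap_of_length_lt {α : Type*} {u v x y s t : List α}
    (h : x ++ u ++ y = s ++ v ++ t) (hxs : x = [] ∨ s = []) (hyt : y = [] ∨ t = [])
    (hsu : s.length < (x ++ u).length) (hxv : x.length < (s ++ v).length) :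
    IsOverlap u v x y s t := by
  have hlen := congrArg List.length h
  simp only [List.length_append] at hlen hsu hxv
  simp only [← List.length_eq_zero_iff] at hxs hyt
  simp only [IsOverlap, h, ne_eq, ← List.length_eq_zero_iff, true_and]
  omega

/-- Whenever `x u y = s v t`, either `u` occurs entirely before `v`, or entirely after `v`,
or `u` and `v` properly overlap (up to a common left context `l` and right context `r`). -/
theorem overlap_trichotomy {α : Type*} (x u y s v t : List α)
    (h : x ++ u ++ y = s ++ v ++ t) :
    (x ++ u).length ≤ s.length ∨ (s ++ v).length ≤ x.length ∨
      ∃ l r x' y' s' t' : List α, IsOverlap u v x' y' s' t' ∧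
        x = l ++ x' ∧ s = l ++ s' ∧ y = y' ++ r ∧ t = t' ++ r := by
  refine or_iff_not_imp_left.2 fun hsu => or_iff_not_imp_left.2 fun hxv => ?_
  obtain ⟨l, x', s', rfl, rfl, hxs, h⟩ :=
    List.exists_common_prefix_of_append_eq_append (by simpa only [List.append_assoc] using h)
  obtain ⟨r, y', t', rfl, rfl, hyt, h⟩ :=
    List.exists_common_suffix_of_append_eq_append (a := x' ++ u) (b := s' ++ v)
      (by simpa only [List.append_assoc] using h)
  simp only [List.length_append, not_le] at hsu hxv
  exact ⟨l, r, x', y', s', t',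
    isOverlap_of_length_lt h hxs hyt (by simp only [List.length_append]; omega)
      (by simp only [List.length_append]; omega), rfl, rfl, rfl, rfl⟩
end

section
/- Let H₀ = {e ≤ 0} for a regular expression e over Σ. Then the one-step function of H₀ on languages is the constant function L ↦ Σ^*·⟦e⟧·Σ^*, it is affine, satisfies H₀ ∘ H ⊆ H₀ for every set H of hypotheses, and cl_{H₀ ∪ H} = cl_H ∘ cl_{H₀}. -/
/-- The `H`-closure of a language: the least closure above the one-step function of `H`. -/
def clH {α : Type*} (H : Set (RegularExpression α × RegularExpression α)) :
    Language α → Language α :=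
  lstar (onestep H)

section lstar

variable {X : Type*} [CompleteLattice X]

lemma lstar_const (c x : X) : lstar (fun _ => c) x = x ⊔ c :=
  isLeast_Ici.isGLB.sInf_eq

lemma lstar_const_sup (s : X → X) (c x : X) :
    lstar (fun y => c ⊔ s y) x = lstar s (x ⊔ c) := by
  simp only [lstar, sup_assoc]

end lstar

section onestep

variable {α : Type*}

lemma onestep_union (A B : Set (RegularExpression α × RegularExpression α)) :
    onestep (A ∪ B) = onestep A ⊔ onestep B := by
  ext L w
  simp only [onestep, Set.mem_union, Pi.sup_apply, or_and_right, exists_or]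
  rfl

lemma onestep_singleton_zero (e : RegularExpression α) (L : Language α) :
    onestep {(e, 0)} L = (⊤ : Language α) * e.matches' * ⊤ := by
  ext w
  constructor
  · rintro ⟨p, rfl, u, v, -, x, hx, rfl⟩
    exact ⟨u ++ x, ⟨u, trivial, x, hx, rfl⟩, v, trivial, rfl⟩
  · rintro ⟨ux, ⟨u, -, x, hx, rfl⟩, v, -, rfl⟩
    exact ⟨(e, 0), rfl, u, v, fun y hy => (Language.notMem_zero y hy).elim, x, hx, rfl⟩

end onestep

/-- For `H₀ = {e ≤ 0}`: its one-step function is the constant `Σ^*·⟦e⟧·Σ^*`, it is affine,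
`H₀ ∘ H ⊆ H₀` for every set of hypotheses `H`, and `cl_{H₀ ∪ H} = cl_H ∘ cl_{H₀}`. -/
theorem onestep_le_zero {α : Type*} (e : RegularExpression α) :
    (∀ L : Language α, onestep {(e, (0 : RegularExpression α))} L =
        (⊤ : Language α) * e.matches' * ⊤) ∧
    (∀ S : Set (Language α), S.Nonempty →
        onestep {(e, (0 : RegularExpression α))} (sSup S) =
          ⨆ L ∈ S, onestep {(e, (0 : RegularExpression α))} L) ∧
    (∀ H : Set (RegularExpression α × RegularExpression α), ∀ L : Language α,
        onestep {(e, (0 : RegularExpression α))} (onestep H L) ≤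
          onestep {(e, (0 : RegularExpression α))} L) ∧
    (∀ H : Set (RegularExpression α × RegularExpression α), ∀ L : Language α,
        clH ({(e, (0 : RegularExpression α))} ∪ H) L =
          clH H (clH {(e, (0 : RegularExpression α))} L)) := by
  have hconst : onestep {(e, (0 : RegularExpression α))} =
      fun _ => (⊤ : Language α) * e.matches' * ⊤ := funext (onestep_singleton_zero e)
  refine ⟨onestep_singleton_zero e, fun S hS => ?_, fun H L => ?_, fun H L => ?_⟩
  · simp only [hconst, biSup_const hS]
  · simp only [hconst, le_refl]
  · simp only [clH, onestep_union, hconst, lstar_const]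
    exact lstar_const_sup (onestep H) _ L
end
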